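/- Let G = (V,E) be a finite self-loopless directed graph with I ⊆ V filling V, and let I' ⊆ V and I'_n denote the determination closure of I in the edge-reduced graph G' = (V, E \ {(x,i) : x ∈ V, i ∈ I}). Then for all n, I_n ⊆ I'_n, where I_n is the determination closure of I in G; in particular I fills V in G'. -/

import Mathlib

/-- Incoming vertices of `v` w.r.t. edge relation `E`. -/
def inSet {V : Type*} (E : V → V → Prop) (v : V) : Set V := {w | E w v}

/-- Vertices (completely) determined by `S`. -/
def Dtm {V : Type*} (E : V → V → Prop) (S : Set V) : Set V :=
  {v | (inSet E v).Nonempty ∧ inSet E v ⊆ S}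

/-- Iterated determination closure. -/
def dcl {V : Type*} (E : V → V → Prop) (I : Set V) : ℕ → Set V
  | 0 => I
  | n + 1 => dcl E I n ∪ Dtm E (dcl E I n)

/-- `I` fills the vertex set. -/
def Fills {V : Type*} (E : V → V → Prop) (I : Set V) : Prop :=
  ∃ n, dcl E I n = Set.univ

/-- `C` is (the vertex image of) a directed closed walk of positive length. -/
def IsCycle {V : Type*} (E : V → V → Prop) (C : Set V) : Prop :=
  ∃ (n : ℕ) (p : ℕ → V), 1 ≤ n ∧ p 0 = p n ∧ (∀ k < n, E (p k) (p (k + 1))) ∧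
    C = p '' {k | k ≤ n}

/- Removing the edges into `I` changes no in-neighbourhood outside `I`, and every closure stage
already contains `I`, so the two closures agree stage by stage. -/

section Closure

variable {V : Type*} {E E' : V → V → Prop} {I : Set V}

theorem subset_dcl (E : V → V → Prop) (I : Set V) (n : ℕ) : I ⊆ dcl E I n := by
  induction n with
  | zero => exact subset_rfl
  | succ n ih => exact ih.trans Set.subset_union_left

theorem union_Dtm_congr {S : Set V} (hIS : I ⊆ S) (h : ∀ v ∉ I, inSet E' v = inSet E v) :
    S ∪ Dtm E' S = S ∪ Dtm E S := by
  ext v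
  by_cases hvS : v ∈ S
  · simp [hvS]
  · simp only [Set.mem_union, hvS, false_or, Dtm, Set.mem_ofPred_eq,
      h v fun hvI => hvS (hIS hvI)]

theorem dcl_congr_of_inSet_eq (h : ∀ v ∉ I, inSet E' v = inSet E v) (n : ℕ) :
    dcl E' I n = dcl E I n := by
  induction n with
  | zero => rfl
  | succ n ih => simp only [dcl, ih, union_Dtm_congr (subset_dcl E I n) h]

theorem inSet_removeEdgesInto (E : V → V → Prop) {v : V} (hv : v ∉ I) :
    inSet (fun x y => E x y ∧ y ∉ I) v = inSet E v := by
  ext w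
  simp [inSet, hv]

end Closure

theorem closure_mono_reduced_general {V : Type*} (E : V → V → Prop)
    (I : Set V) (hI : Fills E I) :
    (∀ n : ℕ, dcl E I n ⊆ dcl (fun x y => E x y ∧ y ∉ I) I n) ∧
      Fills (fun x y => E x y ∧ y ∉ I) I := by
  have hdcl (n : ℕ) : dcl (fun x y => E x y ∧ y ∉ I) I n = dcl E I n :=
    dcl_congr_of_inSet_eq (fun _ hv => inSet_removeEdgesInto E hv) n
  refine ⟨fun n => (hdcl n).ge, ?_⟩
  obtain ⟨n, hn⟩ := hI
  exact ⟨n, (hdcl n).trans hn⟩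

theorem closure_mono_reduced {V : Type*} [Fintype V] (E : V → V → Prop)
    (hloopless : ∀ v, ¬ E v v) (I : Set V) (hI : Fills E I) :
    (∀ n : ℕ, dcl E I n ⊆ dcl (fun x y => E x y ∧ y ∉ I) I n) ∧
      Fills (fun x y => E x y ∧ y ∉ I) I :=
  closure_mono_reduced_general E I hI
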